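/- Let à have ‖Ã^k‖ ≤ c λ^k for all k ≥ 0 with λ ∈ (0,1), and let (ẑ_t) be a sequence with ‖ẑ_t − ẑ_{t+1}‖ ≤ h δ_t for nonnegative reals δ_t. If ε_t = Ã^t ε_0 + Σ_{i=0}^{t−1} Ã^i(ẑ_{t−i−1} − ẑ_{t−i}), then Σ_{t=0}^{T−1} ‖ε_t‖ ≤ (c/(1−λ)) (‖ε_0‖ + h Σ_{t=0}^{T−1} δ_t). -/

import Mathlib

open scoped Matrix.Norms.L2Operator

/-- Matrix-vector product as a map of Euclidean spaces. -/
noncomputable def mulE {a b : ℕ} (A : Matrix (Fin a) (Fin b) ℝ) (x : EuclideanSpace ℝ (Fin b)) :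
    EuclideanSpace ℝ (Fin a) :=
  (WithLp.equiv 2 _).symm (A.mulVec ((WithLp.equiv 2 _) x))

/-!
Bound `‖Ãⁱ‖ ≤ c λⁱ` and `‖ẑ_{s} - ẑ_{s+1}‖ ≤ h δ_s` termwise, so that `‖ε_t‖` is at most
`c λᵗ ‖ε₀‖` plus a truncated convolution of `(c λⁱ)` with `(h δ_j)`. Summing over `t < T`, the
convolution terms are dominated by the Cauchy product `(Σ c λⁱ)(Σ h δ_j)`, and the geometric sum
is at most `c / (1 - λ)`.
-/

open Finset

theorem sum_range_sum_range_mul_le_mul_sum {a b : ℕ → ℝ} (ha : ∀ i, 0 ≤ a i)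
    (hb : ∀ j, 0 ≤ b j) (T : ℕ) :
    ∑ t ∈ range T, ∑ i ∈ range t, a i * b (t - i - 1) ≤
      (∑ i ∈ range T, a i) * ∑ j ∈ range T, b j := by
  rw [sum_comm' (t' := range T) (s' := fun i => Ico (i + 1) T)
    (by intro t i; simp only [mem_range, mem_Ico, Order.add_one_le_iff]; omega),
    sum_mul]
  refine sum_le_sum fun i _ => ?_
  rw [← mul_sum, sum_Ico_eq_sum_range]
  simp only [show ∀ k, i + 1 + k - i - 1 = k by omega]
  exact mul_le_mul_of_nonneg_left
    (sum_le_sum_of_subset_of_nonneg (range_subset_range.2 (by omega)) fun j _ _ => hb j) (ha i)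

theorem sum_range_le_mul_of_le_convolution {x a b : ℕ → ℝ} {e : ℝ} (ha : ∀ i, 0 ≤ a i)
    (hb : ∀ j, 0 ≤ b j) (hx : ∀ t, x t ≤ a t * e + ∑ i ∈ range t, a i * b (t - i - 1))
    (T : ℕ) :
    ∑ t ∈ range T, x t ≤ (∑ i ∈ range T, a i) * (e + ∑ j ∈ range T, b j) :=
  calc ∑ t ∈ range T, x t
      ≤ (∑ t ∈ range T, a t) * e + ∑ t ∈ range T, ∑ i ∈ range t, a i * b (t - i - 1) := by
        rw [sum_mul, ← sum_add_distrib]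
        exact sum_le_sum fun t _ => hx t
    _ ≤ (∑ i ∈ range T, a i) * (e + ∑ j ∈ range T, b j) := by
        rw [mul_add]
        gcongr
        exact sum_range_sum_range_mul_le_mul_sum ha hb T

theorem norm_mulE_le {a b : ℕ} (A : Matrix (Fin a) (Fin b) ℝ) (x : EuclideanSpace ℝ (Fin b)) :
    ‖mulE A x‖ ≤ ‖A‖ * ‖x‖ :=
  A.l2_opNorm_mulVec x

theorem norm_mulE_pow_add_sum_le {p : ℕ} {A : Matrix (Fin p) (Fin p) ℝ} {c lam h : ℝ}
    (hA : ∀ k : ℕ, ‖A ^ k‖ ≤ c * lam ^ k) {z : ℕ → EuclideanSpace ℝ (Fin p)} {δ : ℕ → ℝ}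
    (hz : ∀ t, ‖z t - z (t + 1)‖ ≤ h * δ t) (x₀ : EuclideanSpace ℝ (Fin p)) (t : ℕ) :
    ‖mulE (A ^ t) x₀ + ∑ i ∈ range t, mulE (A ^ i) (z (t - i - 1) - z (t - i))‖ ≤
      c * lam ^ t * ‖x₀‖ + ∑ i ∈ range t, c * lam ^ i * (h * δ (t - i - 1)) := by
  refine (norm_add_le _ _).trans (add_le_add ?_ ?_)
  · exact (norm_mulE_le _ _).trans (mul_le_mul_of_nonneg_right (hA t) (norm_nonneg _))
  · refine (norm_sum_le _ _).trans (sum_le_sum fun i hi => (norm_mulE_le _ _).trans ?_)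
    have hz' : ‖z (t - i - 1) - z (t - i)‖ ≤ h * δ (t - i - 1) := by
      have : t - i = t - i - 1 + 1 := by have := mem_range.1 hi; omega
      rw [this]
      exact hz _
    exact mul_le_mul (hA i) hz' (norm_nonneg _) ((norm_nonneg _).trans (hA i))

theorem stmt10_general {p : ℕ} (At : Matrix (Fin p) (Fin p) ℝ) (c lam h : ℝ)
    (hlam0 : 0 < lam) (hlam1 : lam < 1) (hc : 0 < c)
    (hA : ∀ k : ℕ, ‖At ^ k‖ ≤ c * lam ^ k)
    (zhat ε : ℕ → EuclideanSpace ℝ (Fin p)) (δ : ℕ → ℝ)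
    (hz : ∀ t, ‖zhat t - zhat (t + 1)‖ ≤ h * δ t)
    (hε : ∀ t, ε t = mulE (At ^ t) (ε 0) +
      ∑ i ∈ Finset.range t, mulE (At ^ i) (zhat (t - i - 1) - zhat (t - i)))
    (T : ℕ) :
    ∑ t ∈ Finset.range T, ‖ε t‖ ≤
      c / (1 - lam) * (‖ε 0‖ + h * ∑ t ∈ Finset.range T, δ t) := by
  have hhδ : ∀ t, 0 ≤ h * δ t := fun t => (norm_nonneg _).trans (hz t)
  have hgeom : ∑ i ∈ range T, c * lam ^ i ≤ c / (1 - lam) := by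
    rw [← mul_sum, ← mul_one_div]
    have := geom_sum_Ico_le_of_lt_one (m := 0) (n := T) hlam0.le hlam1
    rw [← range_eq_Ico, pow_zero] at this
    exact mul_le_mul_of_nonneg_left this hc.le
  rw [mul_sum]
  calc ∑ t ∈ range T, ‖ε t‖
      ≤ (∑ i ∈ range T, c * lam ^ i) * (‖ε 0‖ + ∑ j ∈ range T, h * δ j) :=
        sum_range_le_mul_of_le_convolution (fun i => by positivity) hhδ
          (fun t => hε t ▸ norm_mulE_pow_add_sum_le hA hz (ε 0) t) T
    _ ≤ c / (1 - lam) * (‖ε 0‖ + ∑ j ∈ range T, h * δ j) :=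
        mul_le_mul_of_nonneg_right hgeom (add_nonneg (norm_nonneg _) (sum_nonneg fun j _ => hhδ j))

/-- summed bound on the error states. -/
theorem stmt10 {p : ℕ} (At : Matrix (Fin p) (Fin p) ℝ) (c lam h : ℝ)
    (hlam0 : 0 < lam) (hlam1 : lam < 1) (hc : 0 < c)
    (hA : ∀ k : ℕ, ‖At ^ k‖ ≤ c * lam ^ k)
    (zhat ε : ℕ → EuclideanSpace ℝ (Fin p)) (δ : ℕ → ℝ) (hδ : ∀ t, 0 ≤ δ t)
    (hz : ∀ t, ‖zhat t - zhat (t + 1)‖ ≤ h * δ t)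
    (hε : ∀ t, ε t = mulE (At ^ t) (ε 0) +
      ∑ i ∈ Finset.range t, mulE (At ^ i) (zhat (t - i - 1) - zhat (t - i)))
    (T : ℕ) :
    ∑ t ∈ Finset.range T, ‖ε t‖ ≤
      c / (1 - lam) * (‖ε 0‖ + h * ∑ t ∈ Finset.range T, δ t) :=
  stmt10_general At c lam h hlam0 hlam1 hc hA zhat ε δ hz hε T
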